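/- With notation as above, the sectional curvature κ^f of the warped metric g_f on a plane spanned by orthonormal (with respect to g_f) vectors X, Y both orthogonal to F satisfies κ^f(X,Y) = κ(X,Y) + 3(1−f²)‖A(X,Y)‖² + ((1−f²)/f²)‖S(X,Y)‖² − ((1−f²)/f²)⟨S(X,X),S(Y,Y)⟩. -/

import Mathlib

open scoped RealInnerProductSpace

/-- Abstract model of the smooth vector-field calculus of a foliated Riemannian
manifold `(M, 𝓕, g)`.  Here `C` plays the role of the algebra of smooth
functions on `M` and `V` that of the `C`-module of smooth vector fields.
`F` is the submodule of sections tangent to the foliation, `Fp` the submodule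
of sections orthogonal to it, `pt`/`pp` the corresponding projections,
`g` the Riemannian metric, `lie` the Lie bracket, `act` the action of a vector
field on a function (directional derivative) and `nabla` the Levi-Civita
connection of `g`. -/
structure FoliatedRiemann (C : Type*) (V : Type*) [CommRing C] [Algebra ℝ C]
    [AddCommGroup V] [Module C V] where
  g : V → V → C
  lie : V → V → V
  act : V → C → C
  nabla : V → V → V
  F : Submodule C V
  Fp : Submodule C V
  pt : V → V
  pp : V → V
  g_symm : ∀ v w, g v w = g w v
  g_addl : ∀ u v w, g (u + v) w = g u w + g v w
  g_smull : ∀ (c : C) (v w : V), g (c • v) w = c * g v w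
  g_nondeg : ∀ v, (∀ w, g v w = 0) → v = 0
  pt_mem : ∀ v, pt v ∈ F
  pp_mem : ∀ v, pp v ∈ Fp
  decomp : ∀ v, pt v + pp v = v
  pt_of_mem : ∀ v ∈ F, pt v = v
  pp_of_mem : ∀ v ∈ Fp, pp v = v
  orth : ∀ u x, u ∈ F → x ∈ Fp → g u x = 0
  full_orth : ∀ v, (∀ u ∈ F, g v u = 0) → v ∈ Fp
  torsion_free : ∀ v w, nabla v w - nabla w v = lie v w
  compat : ∀ e v w, act e (g v w) = g (nabla e v) w + g v (nabla e w)
  nabla_addl : ∀ u v w, nabla (u + v) w = nabla u w + nabla v w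
  nabla_smull : ∀ (c : C) (v w : V), nabla (c • v) w = c • nabla v w
  nabla_addr : ∀ u v w, nabla u (v + w) = nabla u v + nabla u w
  nabla_leibniz : ∀ (u : V) (c : C) (v : V), nabla u (c • v) = act u c • v + c • nabla u v
  act_add : ∀ (v : V) (a b : C), act v (a + b) = act v a + act v b
  act_mul : ∀ (v : V) (a b : C), act v (a * b) = act v a * b + a * act v b
  act_const : ∀ (v : V) (r : ℝ), act v (algebraMap ℝ C r) = 0

namespace FoliatedRiemann

variable {C V : Type*} [CommRing C] [Algebra ℝ C] [AddCommGroup V] [Module C V]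
variable (M : FoliatedRiemann C V)

/-- A basic function: constant along the leaves of the foliation. -/
def Basic (f : C) : Prop := ∀ u ∈ M.F, M.act u f = 0

/-- The warped metric `g_f`: equal to `f² g` on tangent components and to `g`
on orthogonal components. -/
def gf (f : C) (v w : V) : C := f ^ 2 * M.g (M.pt v) (M.pt w) + M.g (M.pp v) (M.pp w)

/-- The curvature tensor of a connection `n`. -/
def Rc (n : V → V → V) (x y z : V) : V := n x (n y z) - n y (n x z) - n (M.lie x y) z

/-- Lie derivative of a metric `h` in the direction `u`, evaluated on `x, y`. -/
def lieDer (h : V → V → C) (u x y : V) : C :=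
  M.act u (h x y) - h (M.lie u x) y - h x (M.lie u y)

/-- `n` is the Levi-Civita connection of the metric `h`: it is torsion free and
metric-compatible (which determines it uniquely, by the Koszul formula). -/
def IsLeviCivita (n : V → V → V) (h : V → V → C) : Prop :=
  (∀ v w, n v w - n w v = M.lie v w) ∧
  (∀ e v w, M.act e (h v w) = h (n e v) w + h v (n e w))

end FoliatedRiemann

/-!
For `X, Y` orthogonal to the foliation the tangential part of `∇_X Y` is `S(X,Y) + A(X,Y)`, and the
Koszul formula gives `∇ᶠ_X Y = ∇_X Y + (f⁻² - 1) S(X,Y)`. Expanding `g_f(R^f(X,Y)Y, X)` by metric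
compatibility, every term equals its `g`-counterpart up to multiples of `‖A(X,Y)‖²`, `‖S(X,Y)‖²`
and `⟨S(X,X), S(Y,Y)⟩`; the `A`-terms come from `g_f(∇ᶠ_X Y, ∇ᶠ_Y X)` and, since
`[X,Y]^⊤ = 2A(X,Y)`, from `g_f(∇ᶠ_{[X,Y]} Y, X)`.
-/

namespace FoliatedRiemann

theorem eq_of_add_self_eq_add_self {C V : Type*} [CommRing C] [Algebra ℝ C] [AddCommGroup V]
    [Module C V] {p q : V} (h : p + p = q + q) : p = q := by
  have h2 : algebraMap ℝ C 2 • p = algebraMap ℝ C 2 • q := by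
    rw [map_ofNat, two_smul, two_smul, h]
  simpa [smul_smul, ← map_mul] using congrArg (algebraMap ℝ C (1 / 2) • ·) h2

variable {C V : Type*} [CommRing C] [Algebra ℝ C] [AddCommGroup V] [Module C V]
variable (M : FoliatedRiemann C V)

theorem g_addr (u v w : V) : M.g u (v + w) = M.g u v + M.g u w := by
  rw [M.g_symm, M.g_addl, M.g_symm v, M.g_symm w]

theorem g_smulr (c : C) (u v : V) : M.g u (c • v) = c * M.g u v := by
  rw [M.g_symm, M.g_smull, M.g_symm]

theorem g_negl (u v : V) : M.g (-u) v = -M.g u v := by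
  simpa using M.g_smull (-1) u v

theorem g_negr (u v : V) : M.g u (-v) = -M.g u v := by
  rw [M.g_symm, g_negl, M.g_symm]

theorem g_subl (u v w : V) : M.g (u - v) w = M.g u w - M.g v w := by
  rw [sub_eq_add_neg, M.g_addl, g_negl, sub_eq_add_neg]

theorem g_zeror (v : V) : M.g v 0 = 0 := by
  simpa using M.g_smulr 0 v v

theorem isLeviCivita_nabla : M.IsLeviCivita M.nabla M.g :=
  ⟨M.torsion_free, M.compat⟩

variable {M} in
theorem IsLeviCivita.koszul {n : V → V → V} {h : V → V → C} (hn : M.IsLeviCivita n h)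
    (hsymm : ∀ v w, h v w = h w v) (hsubl : ∀ u v w, h (u - v) w = h u w - h v w)
    (a b z : V) :
    h (n a b) z + h (n a b) z
      = M.act a (h b z) + M.act b (h z a) - M.act z (h a b)
        + h (M.lie a b) z - h (M.lie a z) b - h (M.lie b z) a := by
  obtain ⟨htors, hcompat⟩ := hn
  have hsubr : ∀ u v w, h u (v - w) = h u v - h u w := fun u v w => by
    rw [hsymm, hsubl, hsymm v, hsymm w]
  have t1 : n b a = n a b - M.lie a b := by rw [← htors a b]; abel
  have t2 : n z a = n a z - M.lie a z := by rw [← htors a z]; abel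
  have t3 : n z b = n b z - M.lie b z := by rw [← htors b z]; abel
  rw [hcompat a b z, hcompat b z a, hcompat z a b, t1, t2, t3, hsubr, hsubr, hsubl]
  linear_combination hsymm (n a z) b + hsymm (n a b) z + hsymm z (M.lie a b)
    + hsymm a (n b z) - hsymm a (M.lie b z)

theorem eq_zero_of_mem_F_of_mem_Fp {w : V} (hF : w ∈ M.F) (hFp : w ∈ M.Fp) : w = 0 := by
  apply M.g_nondeg
  intro z
  rw [← M.decomp z, g_addr, M.g_symm w, M.orth _ _ (M.pt_mem z) hFp,
    M.orth _ _ hF (M.pp_mem z), add_zero]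

theorem pt_eq_of_add_eq {a b v : V} (ha : a ∈ M.F) (hb : b ∈ M.Fp) (hv : a + b = v) :
    M.pt v = a := by
  have hdiff : M.pt v - a = b - M.pp v := by
    linear_combination (norm := abel) M.decomp v - hv
  have h0 := M.eq_zero_of_mem_F_of_mem_Fp (M.F.sub_mem (M.pt_mem v) ha)
    (hdiff ▸ M.Fp.sub_mem hb (M.pp_mem v))
  exact sub_eq_zero.mp h0

theorem pt_of_mem_Fp {v : V} (hv : v ∈ M.Fp) : M.pt v = 0 :=
  M.pt_eq_of_add_eq M.F.zero_mem hv (zero_add v)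

theorem pt_add (v w : V) : M.pt (v + w) = M.pt v + M.pt w :=
  M.pt_eq_of_add_eq (M.F.add_mem (M.pt_mem v) (M.pt_mem w))
    (M.Fp.add_mem (M.pp_mem v) (M.pp_mem w)) (by rw [add_add_add_comm, M.decomp, M.decomp])

theorem pt_smul (c : C) (v : V) : M.pt (c • v) = c • M.pt v :=
  M.pt_eq_of_add_eq (M.F.smul_mem c (M.pt_mem v)) (M.Fp.smul_mem c (M.pp_mem v))
    (by rw [← smul_add, M.decomp])

theorem pt_sub (v w : V) : M.pt (v - w) = M.pt v - M.pt w :=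
  M.pt_eq_of_add_eq (M.F.sub_mem (M.pt_mem v) (M.pt_mem w))
    (M.Fp.sub_mem (M.pp_mem v) (M.pp_mem w)) (by rw [sub_add_sub_comm, M.decomp, M.decomp])

theorem g_pt_left (w : V) {u : V} (hu : u ∈ M.F) : M.g w u = M.g (M.pt w) u := by
  conv_lhs => rw [← M.decomp w]
  rw [M.g_addl, M.g_symm (M.pp w), M.orth _ _ hu (M.pp_mem w), add_zero]

theorem g_eq_pt_add_pp (v w : V) :
    M.g v w = M.g (M.pt v) (M.pt w) + M.g (M.pp v) (M.pp w) := by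
  conv_lhs => rw [← M.decomp v, ← M.decomp w]
  rw [M.g_addl, g_addr, g_addr, M.orth _ _ (M.pt_mem v) (M.pp_mem w),
    M.g_symm (M.pp v), M.orth _ _ (M.pt_mem w) (M.pp_mem v)]
  ring

theorem g_pt_right {u : V} (hu : u ∈ M.F) (w : V) : M.g u w = M.g u (M.pt w) := by
  rw [M.g_symm, M.g_pt_left w hu, M.g_symm]

theorem eq_of_forall_g_eq {a b : V} (ha : a ∈ M.F) (hb : b ∈ M.F)
    (h : ∀ u ∈ M.F, M.g a u = M.g b u) : a = b := by
  refine sub_eq_zero.mp (M.g_nondeg _ fun z => ?_)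
  have hsub : a - b ∈ M.F := M.F.sub_mem ha hb
  rw [← M.decomp z, g_addr, M.orth _ _ hsub (M.pp_mem z), g_subl, h _ (M.pt_mem z)]
  ring

section WarpedMetric

variable (f : C)

theorem gf_eq (v w : V) : M.gf f v w = M.g v w + (f ^ 2 - 1) * M.g (M.pt v) (M.pt w) := by
  rw [gf, M.g_eq_pt_add_pp v w]
  ring

theorem gf_symm (v w : V) : M.gf f v w = M.gf f w v := by
  rw [gf_eq, gf_eq, M.g_symm, M.g_symm (M.pt v)]

theorem gf_subl (u v w : V) : M.gf f (u - v) w = M.gf f u w - M.gf f v w := by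
  rw [gf_eq, gf_eq, gf_eq, g_subl, pt_sub, g_subl]
  ring

variable {f}

theorem gf_of_mem_Fp_right (v : V) {z : V} (hz : z ∈ M.Fp) : M.gf f v z = M.g v z := by
  rw [gf_eq, M.pt_of_mem_Fp hz, g_zeror, mul_zero, add_zero]

theorem gf_of_mem_Fp_left {z : V} (hz : z ∈ M.Fp) (v : V) : M.gf f z v = M.g z v := by
  rw [gf_symm, gf_of_mem_Fp_right M v hz, M.g_symm]

theorem gf_raise {finv : C} (hfinv : f * finv = 1) (v z : V) :
    M.gf f v (finv ^ 2 • M.pt z + M.pp z) = M.g v z := by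
  rw [gf_eq, pt_add, pt_smul, M.pt_of_mem _ (M.pt_mem z), M.pt_of_mem_Fp (M.pp_mem z),
    add_zero, g_addr, g_smulr, g_smulr, ← M.g_pt_left v (M.pt_mem z)]
  have hsplit := M.g_addr v (M.pt z) (M.pp z)
  rw [M.decomp] at hsplit
  linear_combination (f * finv + 1) * M.g v (M.pt z) * hfinv - hsplit

theorem eq_of_forall_gf_eq {finv : C} (hfinv : f * finv = 1) {v w : V}
    (h : ∀ z, M.gf f v z = M.gf f w z) : v = w := by
  refine sub_eq_zero.mp (M.g_nondeg _ fun z => ?_)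
  rw [← M.gf_raise hfinv, gf_subl, h, sub_self]

end WarpedMetric

structure IsONeillSplitting (A S : V → V → V) : Prop where
  mem_A : ∀ x y, x ∈ M.Fp → y ∈ M.Fp → A x y ∈ M.F
  mem_S : ∀ x y, x ∈ M.Fp → y ∈ M.Fp → S x y ∈ M.F
  A_antisymm : ∀ x y, x ∈ M.Fp → y ∈ M.Fp → A y x = -A x y
  S_symm : ∀ x y, x ∈ M.Fp → y ∈ M.Fp → S y x = S x y
  pt_nabla : ∀ x y, x ∈ M.Fp → y ∈ M.Fp → M.pt (M.nabla x y) = S x y + A x y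

namespace IsONeillSplitting

variable {M} {A S : V → V → V}

theorem of_g_eq
    (hAval : ∀ x y, x ∈ M.Fp → y ∈ M.Fp → A x y ∈ M.F)
    (hAdef : ∀ x y, x ∈ M.Fp → y ∈ M.Fp → ∀ u ∈ M.F,
      M.g (A x y) u = (1/2 : ℝ) • (M.g (M.nabla x y) u - M.g (M.nabla y x) u))
    (hSval : ∀ x y, x ∈ M.Fp → y ∈ M.Fp → S x y ∈ M.F)
    (hSdef : ∀ x y, x ∈ M.Fp → y ∈ M.Fp → ∀ u ∈ M.F,
      M.g (S x y) u = (1/2 : ℝ) • (M.g (M.nabla x y) u + M.g (M.nabla y x) u)) :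
    M.IsONeillSplitting A S where
  mem_A := hAval
  mem_S := hSval
  A_antisymm x y hx hy := by
    refine M.eq_of_forall_g_eq (hAval y x hy hx) (M.F.neg_mem (hAval x y hx hy)) fun u hu => ?_
    rw [g_negl, hAdef y x hy hx u hu, hAdef x y hx hy u hu, ← smul_neg, neg_sub]
  S_symm x y hx hy :=
    M.eq_of_forall_g_eq (hSval y x hy hx) (hSval x y hx hy) fun u hu => by
      rw [hSdef y x hy hx u hu, hSdef x y hx hy u hu, add_comm]
  pt_nabla x y hx hy := by
    refine M.eq_of_forall_g_eq (M.pt_mem _)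
      (M.F.add_mem (hSval x y hx hy) (hAval x y hx hy)) fun u hu => ?_
    rw [← M.g_pt_left _ hu, M.g_addl, hSdef x y hx hy u hu, hAdef x y hx hy u hu, ← smul_add,
      add_add_sub_cancel, ← two_smul ℝ, smul_smul]
    norm_num

theorem A_self (hAS : M.IsONeillSplitting A S) {x : V} (hx : x ∈ M.Fp) : A x x = 0 :=
  eq_of_add_self_eq_add_self (C := C) <| by
    rw [eq_neg_iff_add_eq_zero.mp (hAS.A_antisymm x x hx hx), add_zero]

theorem pt_lie (hAS : M.IsONeillSplitting A S) {x y : V} (hx : x ∈ M.Fp) (hy : y ∈ M.Fp) :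
    M.pt (M.lie x y) = A x y + A x y := by
  rw [← M.torsion_free, M.pt_sub, hAS.pt_nabla x y hx hy, hAS.pt_nabla y x hy hx,
    hAS.S_symm x y hx hy, hAS.A_antisymm x y hx hy]
  abel

end IsONeillSplitting

section WarpedConnection

variable {M} {f finv : C} {nf A S : V → V → V}

theorem gf_nf_of_mem_Fp (hnf : M.IsLeviCivita nf (M.gf f)) (hAS : M.IsONeillSplitting A S)
    {v w : V} (hv : v ∈ M.Fp) (hw : w ∈ M.Fp) (z : V) :
    M.gf f (nf v w) z = M.g (M.nabla v w) z + (f ^ 2 - 1) * M.g (A v w) (M.pt z) := by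
  apply eq_of_add_self_eq_add_self (C := C)
  have hf := hnf.koszul (M.gf_symm f) (M.gf_subl f) v w z
  have hg := (M.isLeviCivita_nabla).koszul M.g_symm M.g_subl v w z
  rw [M.gf_of_mem_Fp_left hw z, M.gf_of_mem_Fp_right z hv, M.gf_of_mem_Fp_right v hw,
    M.gf_of_mem_Fp_right (M.lie v z) hw, M.gf_of_mem_Fp_right (M.lie w z) hv,
    M.gf_eq f (M.lie v w), hAS.pt_lie hv hw, M.g_addl] at hf
  linear_combination hf - hg

theorem gf_nf_apply_of_mem_Fp (hnf : M.IsLeviCivita nf (M.gf f))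
    (hAS : M.IsONeillSplitting A S) {x y : V} (hx : x ∈ M.Fp) (hy : y ∈ M.Fp) (a : V) :
    M.gf f (nf a y) x = M.g (M.nabla a y) x - (f ^ 2 - 1) * M.g (A y x) (M.pt a) := by
  apply eq_of_add_self_eq_add_self (C := C)
  have hf := hnf.koszul (M.gf_symm f) (M.gf_subl f) a y x
  have hg := (M.isLeviCivita_nabla).koszul M.g_symm M.g_subl a y x
  rw [M.gf_of_mem_Fp_right y hx, M.gf_of_mem_Fp_left hx a, M.gf_of_mem_Fp_right a hy,
    M.gf_of_mem_Fp_right (M.lie a y) hx, M.gf_of_mem_Fp_right (M.lie a x) hy,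
    M.gf_eq f (M.lie y x), hAS.pt_lie hy hx, M.g_addl] at hf
  linear_combination hf - hg

theorem nf_eq_nabla_add (hfinv : f * finv = 1) (hnf : M.IsLeviCivita nf (M.gf f))
    (hAS : M.IsONeillSplitting A S) {v w : V} (hv : v ∈ M.Fp) (hw : w ∈ M.Fp) :
    nf v w = M.nabla v w + (finv ^ 2 - 1) • S v w := by
  have hS := hAS.mem_S v w hv hw
  refine M.eq_of_forall_gf_eq hfinv fun z => ?_
  rw [gf_nf_of_mem_Fp hnf hAS hv hw, gf_eq, pt_add, pt_smul, M.pt_of_mem _ hS,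
    hAS.pt_nabla v w hv hw, M.g_addl, M.g_smull, M.g_pt_right hS z, M.g_addl, M.g_addl,
    M.g_smull]
  linear_combination -(f * finv + 1) * M.g (S v w) (M.pt z) * hfinv

theorem gf_nf_nf (hfinv : f * finv = 1) (hnf : M.IsLeviCivita nf (M.gf f))
    (hAS : M.IsONeillSplitting A S) {v w v' w' : V} (hv : v ∈ M.Fp) (hw : w ∈ M.Fp)
    (hv' : v' ∈ M.Fp) (hw' : w' ∈ M.Fp) :
    M.gf f (nf v w) (nf v' w')
      = M.g (M.nabla v w) (M.nabla v' w') + (finv ^ 2 - 1) * M.g (S v w) (S v' w')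
        + (f ^ 2 - 1) * M.g (A v w) (A v' w') := by
  have hS := hAS.mem_S v w hv hw
  have hS' := hAS.mem_S v' w' hv' hw'
  rw [nf_eq_nabla_add hfinv hnf hAS hv hw, nf_eq_nabla_add hfinv hnf hAS hv' hw', gf_eq,
    pt_add, pt_add, pt_smul, pt_smul, M.pt_of_mem _ hS, M.pt_of_mem _ hS',
    hAS.pt_nabla v w hv hw, hAS.pt_nabla v' w' hv' hw']
  simp only [M.g_addl, g_addr, M.g_smull, g_smulr]
  rw [M.g_pt_left (M.nabla v w) hS', hAS.pt_nabla v w hv hw, M.g_pt_right hS (M.nabla v' w'),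
    hAS.pt_nabla v' w' hv' hw', M.g_addl, g_addr]
  linear_combination (f * finv + 1) * (finv ^ 2 * M.g (S v w) (S v' w') + M.g (S v w) (A v' w')
    + M.g (A v w) (S v' w')) * hfinv

theorem gf_nf_nf_apply (hnf : M.IsLeviCivita nf (M.gf f)) (hAS : M.IsONeillSplitting A S)
    {z v w : V} (hz : z ∈ M.Fp) (hv : v ∈ M.Fp) (hw : w ∈ M.Fp) (e : V) :
    M.gf f (nf e (nf v w)) z
      = M.g (M.nabla e (M.nabla v w)) z + M.g (M.nabla v w) (M.nabla e z)
        - M.gf f (nf v w) (nf e z) := by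
  have hf := hnf.2 e (nf v w) z
  have hg := M.compat e (M.nabla v w) z
  rw [gf_nf_of_mem_Fp hnf hAS hv hw, M.pt_of_mem_Fp hz, g_zeror, mul_zero, add_zero] at hf
  linear_combination hg - hf

end WarpedConnection

end FoliatedRiemann

open FoliatedRiemann in
theorem warped_sectional_curvature_orthogonal_general
    {C V : Type*} [CommRing C] [Algebra ℝ C]
    [AddCommGroup V] [Module C V]
    (M : FoliatedRiemann C V) (f finv : C) (hfinv : f * finv = 1)
    (nf A S : V → V → V)
    (hnf : M.IsLeviCivita nf (M.gf f))
    (hAval : ∀ x y, x ∈ M.Fp → y ∈ M.Fp → A x y ∈ M.F)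
    (hAdef : ∀ x y, x ∈ M.Fp → y ∈ M.Fp → ∀ u ∈ M.F,
      M.g (A x y) u = (1/2 : ℝ) • (M.g (M.nabla x y) u - M.g (M.nabla y x) u))
    (hSval : ∀ x y, x ∈ M.Fp → y ∈ M.Fp → S x y ∈ M.F)
    (hSdef : ∀ x y, x ∈ M.Fp → y ∈ M.Fp → ∀ u ∈ M.F,
      M.g (S x y) u = (1/2 : ℝ) • (M.g (M.nabla x y) u + M.g (M.nabla y x) u))
    (x y : V) (hx : x ∈ M.Fp) (hy : y ∈ M.Fp) :
    M.gf f (M.Rc nf x y y) x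
      = M.g (M.Rc M.nabla x y y) x
        + (3 : C) * (1 - f ^ 2) * M.g (A x y) (A x y)
        + (1 - f ^ 2) * finv ^ 2 * M.g (S x y) (S x y)
        - (1 - f ^ 2) * finv ^ 2 * M.g (S x x) (S y y) := by
  have hAS := IsONeillSplitting.of_g_eq hAval hAdef hSval hSdef
  rw [Rc, Rc, gf_subl, gf_subl, g_subl, g_subl, gf_nf_nf_apply hnf hAS hx hy hy,
    gf_nf_nf_apply hnf hAS hx hx hy, gf_nf_nf hfinv hnf hAS hy hy hx hx,
    gf_nf_nf hfinv hnf hAS hx hy hy hx, gf_nf_apply_of_mem_Fp hnf hAS hx hy,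
    hAS.pt_lie hx hy, hAS.A_self hx, hAS.A_self hy, hAS.S_symm x y hx hy,
    hAS.A_antisymm x y hx hy, M.g_symm (S y y), g_zeror, g_negl, g_negr, g_addr]
  linear_combination (f * finv + 1) * (M.g (S x y) (S x y) - M.g (S x x) (S y y)) * hfinv

/-- sectional curvature of the warped metric on a plane spanned by
`g_f`-orthonormal vectors `X, Y` orthogonal to the foliation:
`κ^f(X,Y) = κ(X,Y) + 3(1−f²)‖A(X,Y)‖² + ((1−f²)/f²)‖S(X,Y)‖²
  − ((1−f²)/f²)⟨S(X,X),S(Y,Y)⟩`. -/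
theorem warped_sectional_curvature_orthogonal
    {C V : Type*} [CommRing C] [PartialOrder C] [Algebra ℝ C]
    [AddCommGroup V] [Module C V]
    (M : FoliatedRiemann C V) (f finv : C) (hfpos : 0 < f) (hfinv : f * finv = 1)
    (hbasic : M.Basic f)
    (nf A S : V → V → V)
    (hnf : M.IsLeviCivita nf (M.gf f))
    (hAval : ∀ x y, x ∈ M.Fp → y ∈ M.Fp → A x y ∈ M.F)
    (hAdef : ∀ x y, x ∈ M.Fp → y ∈ M.Fp → ∀ u ∈ M.F,
      M.g (A x y) u = (1/2 : ℝ) • (M.g (M.nabla x y) u - M.g (M.nabla y x) u))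
    (hSval : ∀ x y, x ∈ M.Fp → y ∈ M.Fp → S x y ∈ M.F)
    (hSdef : ∀ x y, x ∈ M.Fp → y ∈ M.Fp → ∀ u ∈ M.F,
      M.g (S x y) u = (1/2 : ℝ) • (M.g (M.nabla x y) u + M.g (M.nabla y x) u))
    (x y : V) (hx : x ∈ M.Fp) (hy : y ∈ M.Fp)
    (hxx : M.gf f x x = 1) (hyy : M.gf f y y = 1) (hxy : M.gf f x y = 0) :
    M.gf f (M.Rc nf x y y) x
      = M.g (M.Rc M.nabla x y y) x
        + (3 : C) * (1 - f ^ 2) * M.g (A x y) (A x y)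
        + (1 - f ^ 2) * finv ^ 2 * M.g (S x y) (S x y)
        - (1 - f ^ 2) * finv ^ 2 * M.g (S x x) (S y y) :=
  warped_sectional_curvature_orthogonal_general M f finv hfinv nf A S hnf hAval hAdef hSval hSdef x
    y hx hy
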